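/- arXiv:2111.00117 — 3 statements merged into one kernel-verified Lean document; each statement's English description precedes it below -/
import Mathlib

section
/- Let a ∈ ℂ. The Gaussian function z ↦ exp(−(1/2) a z²) is square-integrable against the Gaussian measure e^{−|z|²} d²z/π on ℂ (i.e., belongs to Segal–Bargmann space) if and only if |a| < 1. -/
/-!
Rotating `z` by a unit `ω` with `a ω² = |a|` preserves Lebesgue measure and `‖z‖`, and turns the
integrand into `exp (-(|a| z²).re - ‖z‖²)`. In coordinates `z = x + iy` this is
`exp (-(1 + |a|) x²) · exp (-(1 - |a|) y²)`, which is integrable on `ℝ²` iff both coefficients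
are positive.
-/

open MeasureTheory

section MulProd

variable {α β L : Type*} [MeasurableSpace α] [MeasurableSpace β] {μ : Measure α} {ν : Measure β}
  [SFinite μ] [SFinite ν] [NormedDivisionRing L] {f : α → L} {g : β → L}

theorem Integrable.right_of_mul_prod [NeZero μ]
    (h : Integrable (fun z : α × β => f z.1 * g z.2) (μ.prod ν))
    (hf : ∀ x, f x ≠ 0) : Integrable g ν := by
  obtain ⟨x, hx⟩ := h.prod_right_ae.exists
  simpa [← mul_assoc, inv_mul_cancel₀ (hf x)] using hx.const_mul (f x)⁻¹

theorem Integrable.left_of_mul_prod [NeZero ν]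
    (h : Integrable (fun z : α × β => f z.1 * g z.2) (μ.prod ν))
    (hg : ∀ y, g y ≠ 0) : Integrable f μ := by
  obtain ⟨y, hy⟩ := h.prod_left_ae.exists
  simpa [mul_assoc, mul_inv_cancel₀ (hg y)] using hy.mul_const (g y)⁻¹

end MulProd

theorem integrable_exp_neg_mul_sq_mul_exp_neg_mul_sq_iff {b c : ℝ} :
    Integrable (fun p : ℝ × ℝ => Real.exp (-b * p.1 ^ 2) * Real.exp (-c * p.2 ^ 2)) ↔
      0 < b ∧ 0 < c := by
  refine ⟨fun h => ⟨?_, ?_⟩, fun h =>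
    (integrable_exp_neg_mul_sq h.1).mul_prod (integrable_exp_neg_mul_sq h.2)⟩
  · exact integrable_exp_neg_mul_sq_iff.mp <| Integrable.left_of_mul_prod (μ := volume)
      (ν := volume) (f := fun x => Real.exp (-b * x ^ 2)) (g := fun y => Real.exp (-c * y ^ 2)) h
      fun _ => (Real.exp_pos _).ne'
  · exact integrable_exp_neg_mul_sq_iff.mp <| Integrable.right_of_mul_prod (μ := volume)
      (ν := volume) (f := fun x => Real.exp (-b * x ^ 2)) (g := fun y => Real.exp (-c * y ^ 2)) h
      fun _ => (Real.exp_pos _).ne'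

theorem integrable_exp_neg_re_mul_sq_sub_norm_sq_iff (r : ℝ) :
    Integrable (fun z : ℂ => Real.exp (-((r : ℂ) * z ^ 2).re - ‖z‖ ^ 2)) ↔ |r| < 1 := by
  have hsplit : (fun z : ℂ => Real.exp (-((r : ℂ) * z ^ 2).re - ‖z‖ ^ 2)) ∘
      Complex.measurableEquivRealProd.symm =
      fun p : ℝ × ℝ => Real.exp (-(1 + r) * p.1 ^ 2) * Real.exp (-(1 - r) * p.2 ^ 2) := by
    ext ⟨x, y⟩
    simp only [Function.comp_apply, Complex.measurableEquivRealProd_symm_apply, ← Real.exp_add,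
      sq, Complex.norm_mul_self_eq_normSq, Complex.normSq_apply, Complex.mul_re, Complex.mul_im,
      Complex.ofReal_re, Complex.ofReal_im]
    ring_nf
  rw [← Complex.volume_preserving_equiv_real_prod.symm.integrable_comp_emb
      (MeasurableEquiv.measurableEmbedding _), hsplit,
    integrable_exp_neg_mul_sq_mul_exp_neg_mul_sq_iff, abs_lt]
  constructor <;> rintro ⟨h₁, h₂⟩ <;> constructor <;> linarith

theorem exists_circle_mul_sq_eq_norm (a : ℂ) : ∃ ω : Circle, a * (ω : ℂ) ^ 2 = ‖a‖ := by
  refine ⟨Circle.exp (-a.arg / 2), ?_⟩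
  have hsq : (Circle.exp (-a.arg / 2) : ℂ) ^ 2 = Complex.exp (-(a.arg * Complex.I)) := by
    rw [Circle.coe_exp, ← Complex.exp_nat_mul]
    push_cast
    ring_nf
  calc a * _
      = ‖a‖ * Complex.exp (a.arg * Complex.I) * Complex.exp (-(a.arg * Complex.I)) := by
        rw [hsq, Complex.norm_mul_exp_arg_mul_I]
    _ = ‖a‖ := by rw [mul_assoc, ← Complex.exp_add, add_neg_cancel, Complex.exp_zero, mul_one]

theorem norm_cexp_sq_mul_exp_neg_norm_sq (w z : ℂ) :
    ‖Complex.exp w‖ ^ 2 * Real.exp (-‖z‖ ^ 2) = Real.exp (2 * w.re - ‖z‖ ^ 2) := by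
  rw [Complex.norm_exp, ← Real.exp_nat_mul, ← Real.exp_add]
  push_cast
  ring_nf

/-- The Gaussian `exp (-(1/2) a z²)` is in Segal–Bargmann space iff `|a| < 1`. -/
theorem gaussian_mem_SB_iff (a : ℂ) :
    Integrable (fun z : ℂ =>
        ‖Complex.exp (-(1 / 2 : ℂ) * a * z ^ 2)‖ ^ 2
          * Real.exp (-(‖z‖) ^ 2))
      ↔ ‖a‖ < 1 := by
  have hweight : ∀ z : ℂ, 2 * (-(1 / 2 : ℂ) * a * z ^ 2).re = -(a * z ^ 2).re := fun z => by
    simp [mul_assoc, Complex.mul_re]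
  simp_rw [norm_cexp_sq_mul_exp_neg_norm_sq, hweight]
  obtain ⟨ω, hω⟩ := exists_circle_mul_sq_eq_norm a
  rw [← (rotation ω).measurePreserving.integrable_comp_emb
    (rotation ω).toHomeomorph.measurableEmbedding]
  have hrot : ∀ z : ℂ, a * (rotation ω z) ^ 2 = (‖a‖ : ℂ) * z ^ 2 := fun z => by
    rw [rotation_apply, ← hω]; ring
  simp_rw [Function.comp_def, hrot, LinearIsometryEquiv.norm_map]
  rw [integrable_exp_neg_re_mul_sq_sub_norm_sq_iff, abs_norm]
end

section
/- Let s ∈ ℝ and a₀, b₀ ∈ ℂ with |a₀| < 1. Then for every t ∈ ℝ one has 1 − i s t (1 − a₀) ≠ 0, and the solution a(t) = (a₀ − i s t (1 − a₀))/(1 − i s t (1 − a₀)) satisfies |a(t)| < 1. -/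
/-! Numerator and denominator differ by `1 - a₀`, and `i s t (1 - a₀)(1 - conj a₀) = i s t |1 - a₀|²` is
purely imaginary, so the cross terms cancel and |denominator|² − |numerator|² = 1 − |a₀|² > 0. -/

open Complex

theorem normSq_one_sub_mul_eq_normSq_sub_mul_add {w : ℂ} (hw : w.re = 0) (a : ℂ) :
    normSq (1 - w * (1 - a)) = normSq (a - w * (1 - a)) + (1 - normSq a) := by
  simp only [normSq_apply, sub_re, sub_im, mul_re, mul_im, one_re, one_im, hw]
  ring

theorem norm_sub_mul_lt_norm_one_sub_mul {w : ℂ} (hw : w.re = 0) {a : ℂ} (ha : ‖a‖ < 1) :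
    ‖a - w * (1 - a)‖ < ‖1 - w * (1 - a)‖ := by
  have ha' : normSq a < 1 := by
    rw [normSq_eq_norm_sq]
    exact pow_lt_one₀ (norm_nonneg a) ha two_ne_zero
  refine lt_of_pow_lt_pow_left₀ 2 (norm_nonneg _) ?_
  rw [← normSq_eq_norm_sq, ← normSq_eq_norm_sq, normSq_one_sub_mul_eq_normSq_sub_mul_add hw]
  linarith

theorem shearing_preserves_unit_disk_general (s : ℝ) (a₀ : ℂ) (ha₀ : ‖a₀‖ < 1) :
    ∀ t : ℝ,
      1 - Complex.I * s * t * (1 - a₀) ≠ 0 ∧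
      ‖(a₀ - Complex.I * s * t * (1 - a₀)) / (1 - Complex.I * s * t * (1 - a₀))‖ < 1 := by
  intro t
  have hw : (I * s * t).re = 0 := by simp
  have hlt := norm_sub_mul_lt_norm_one_sub_mul hw ha₀
  have hden : 0 < ‖1 - I * s * t * (1 - a₀)‖ := (norm_nonneg _).trans_lt hlt
  exact ⟨norm_pos_iff.mp hden, by rwa [norm_div, div_lt_one hden]⟩

/-- The shearing evolution preserves the open unit disk of squeezing parameters. -/
theorem shearing_preserves_unit_disk (s : ℝ) (a₀ b₀ : ℂ) (ha₀ : ‖a₀‖ < 1) :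
    ∀ t : ℝ,
      1 - Complex.I * s * t * (1 - a₀) ≠ 0 ∧
      ‖(a₀ - Complex.I * s * t * (1 - a₀)) / (1 - Complex.I * s * t * (1 - a₀))‖ < 1 :=
  shearing_preserves_unit_disk_general s a₀ ha₀
end

section
/- Let F(z₁,…,z_m) = P(z₁,…,z_m) · exp(R(z₁,…,z_m)) and G = P' · exp(R') where P, P' are nonzero complex multivariate polynomials and R, R' are complex multivariate polynomials of degree at most 2. If F(z) = G(z) for all z ∈ ℂ^m, then P = P' up to a nonzero multiplicative constant κ, and exp(R) = κ⁻¹·exp(R') pointwise; in particular deg P = deg P'. -/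
/-!
Dividing the two decompositions, `P = P' · exp (R' - R)` pointwise. Restricted to a complex line
through a point where `P' ≠ 0` this reads `s = p · exp q` for one-variable polynomials with
`p ≠ 0`, and then the Wronskian satisfies `W(p, s) = p s q'`. As `deg W(p, s) < deg p + deg s`,
this forces `q' = 0`. Hence `R' - R` is constant on every line, so constant, and `κ` is its
exponential.
-/

open MvPolynomial

namespace Polynomial

theorem eq_zero_of_wronskian_eq_mul {R : Type*} [CommRing R] [IsDomain R] {a b c : R[X]}
    (ha : a ≠ 0) (hb : b ≠ 0) (hw : wronskian a b = a * b * c) : c = 0 := by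
  by_contra hc
  have hw0 : wronskian a b ≠ 0 := hw ▸ mul_ne_zero (mul_ne_zero ha hb) hc
  have := natDegree_wronskian_lt_add hw0
  rw [hw, natDegree_mul (mul_ne_zero ha hb) hc, natDegree_mul ha hb] at this
  omega

theorem wronskian_eq_of_eval_eq_mul_exp {p q s : ℂ[X]}
    (h : ∀ t, s.eval t = p.eval t * Complex.exp (q.eval t)) :
    wronskian p s = p * s * derivative q := by
  have hs : (fun t => s.eval t) = fun t => p.eval t * Complex.exp (q.eval t) := _root_.funext h
  refine Polynomial.funext fun t => ?_
  have hderiv : s.derivative.eval t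
      = p.derivative.eval t * Complex.exp (q.eval t)
        + p.eval t * (Complex.exp (q.eval t) * q.derivative.eval t) :=
    (hs ▸ s.hasDerivAt t).unique ((p.hasDerivAt t).mul (q.hasDerivAt t).cexp)
  simp only [wronskian, eval_sub, eval_mul, hderiv, h]
  ring

theorem derivative_eq_zero_of_eval_eq_mul_exp {p q s : ℂ[X]} (hp : p ≠ 0)
    (h : ∀ t, s.eval t = p.eval t * Complex.exp (q.eval t)) :
    derivative q = 0 := by
  have hs : s ≠ 0 := by
    obtain ⟨t, ht⟩ : ∃ t, p.eval t ≠ 0 := by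
      by_contra! h0
      exact hp (Polynomial.funext fun t => by simpa using h0 t)
    rintro rfl
    simpa [ht, Complex.exp_ne_zero] using h t
  exact eq_zero_of_wronskian_eq_mul hp hs (wronskian_eq_of_eval_eq_mul_exp h)

end Polynomial

namespace MvPolynomial

theorem eval_aeval_polynomial {R σ : Type*} [CommRing R] (φ : σ → Polynomial R)
    (F : MvPolynomial σ R) (t : R) :
    (aeval φ F).eval t = eval (fun i => (φ i).eval t) F := by
  rw [← Polynomial.coe_aeval_eq_eval, ← AlgHom.comp_apply, comp_aeval, ← coe_aeval_eq_eval]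
  rfl

theorem exists_eval_eq_const_of_eval_eq_mul_exp {σ : Type*} {P Q S : MvPolynomial σ ℂ}
    (hP : P ≠ 0) (h : ∀ z, eval z S = eval z P * Complex.exp (eval z Q)) :
    ∃ c, ∀ z, eval z Q = c := by
  obtain ⟨y, hy⟩ : ∃ y, eval y P ≠ 0 := by
    by_contra! h0
    exact hP (MvPolynomial.funext fun y => by simpa using h0 y)
  refine ⟨eval y Q, fun a => ?_⟩
  let line : σ → Polynomial ℂ := fun i => .C (a i) + .X * .C (y i - a i)
  have line_zero : (fun i => (line i).eval 0) = a := by ext; simp [line]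
  have line_one : (fun i => (line i).eval 1) = y := by ext; simp [line]
  have hp : aeval line P ≠ 0 := fun h0 => hy <| by
    simpa [eval_aeval_polynomial, line_one, h0] using (eval_aeval_polynomial line P 1).symm
  have hq := Polynomial.eq_C_of_derivative_eq_zero <|
    Polynomial.derivative_eq_zero_of_eval_eq_mul_exp (s := aeval line S) (q := aeval line Q) hp
      fun t => by simpa only [eval_aeval_polynomial] using h _
  calc eval a Q = (aeval line Q).eval 0 := by rw [eval_aeval_polynomial, line_zero]
    _ = (aeval line Q).eval 1 := by rw [hq, Polynomial.eval_C, Polynomial.eval_C]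
    _ = eval y Q := by rw [eval_aeval_polynomial, line_one]

theorem totalDegree_smul_of_ne_zero {K σ : Type*} [Field K] {a : K} (ha : a ≠ 0)
    (F : MvPolynomial σ K) : (a • F).totalDegree = F.totalDegree :=
  le_antisymm (totalDegree_smul_le a F) <| by
    simpa [smul_smul, ha] using totalDegree_smul_le a⁻¹ (a • F)

end MvPolynomial

theorem stellar_decomposition_unique_general (m : ℕ)
    (P P' R R' : MvPolynomial (Fin m) ℂ)
    (hP' : P' ≠ 0)
    (heq : ∀ z : Fin m → ℂ,
      eval z P * Complex.exp (eval z R) = eval z P' * Complex.exp (eval z R')) :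
    ∃ κ : ℂ, κ ≠ 0 ∧ P = κ • P' ∧
      (∀ z : Fin m → ℂ, Complex.exp (eval z R) = κ⁻¹ * Complex.exp (eval z R')) ∧
      P.totalDegree = P'.totalDegree := by
  obtain ⟨c, hc⟩ :=
    exists_eval_eq_const_of_eval_eq_mul_exp (S := P) (Q := R' - R) hP' fun z => by
      rw [map_sub, Complex.exp_sub, ← mul_div_assoc, ← heq z,
        mul_div_cancel_right₀ _ (Complex.exp_ne_zero _)]
  have hexp : ∀ z, Complex.exp (eval z R') = Complex.exp c * Complex.exp (eval z R) := fun z => by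
    rw [← hc z, map_sub, ← Complex.exp_add, sub_add_cancel]
  have hPP' : P = Complex.exp c • P' := MvPolynomial.funext fun z => by
    apply mul_right_cancel₀ (Complex.exp_ne_zero (eval z R))
    rw [heq, smul_eval, hexp]
    ring
  refine ⟨Complex.exp c, Complex.exp_ne_zero c, hPP', fun z => ?_,
    hPP' ▸ totalDegree_smul_of_ne_zero (Complex.exp_ne_zero c) P'⟩
  rw [hexp, inv_mul_cancel_left₀ (Complex.exp_ne_zero c)]

/-- Uniqueness of the `P × Gaussian` decomposition of a stellar function: two such
decompositions of the same entire function agree up to a nonzero constant, and in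
particular the polynomial parts have the same degree (the stellar rank is well defined). -/
theorem stellar_decomposition_unique (m : ℕ)
    (P P' R R' : MvPolynomial (Fin m) ℂ)
    (hP : P ≠ 0) (hP' : P' ≠ 0)
    (hR : R.totalDegree ≤ 2) (hR' : R'.totalDegree ≤ 2)
    (heq : ∀ z : Fin m → ℂ,
      eval z P * Complex.exp (eval z R) = eval z P' * Complex.exp (eval z R')) :
    ∃ κ : ℂ, κ ≠ 0 ∧ P = κ • P' ∧
      (∀ z : Fin m → ℂ, Complex.exp (eval z R) = κ⁻¹ * Complex.exp (eval z R')) ∧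
      P.totalDegree = P'.totalDegree :=
  stellar_decomposition_unique_general m P P' R R' hP' heq
end
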